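/- arXiv:1412.2817 — 4 statements merged into one kernel-verified Lean document; each statement's English description precedes it below -/
import Mathlib

section
/- Assume R_u is invertible and R_ū := E[ū ūᵀ] = R_u + R_r is invertible, where R_r := −P₁ ⊙ R_u + p σ_ξ² I_M and P₁ = (2p−p²)𝟙𝟙ᵀ − (p−p²)I_M. Then I_M + R_u⁻¹ R_r is invertible, and the estimate computed from censored moments is biased according to w̄ᵒ := R_ū⁻¹ E[d·ū] = (1−p)(I_M − Q) wᵒ, where Q := R_u⁻¹ R_r (I_M + R_u⁻¹ R_r)⁻¹. -/
/-!
Write `ūᵢ = (1 - fᵢ) uᵢ + fᵢ ξᵢ`. Since `u` is independent of `fᵢ`, the first term contributes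
`(1 - p) E[uⱼ uᵢ]` to `E[uⱼ ūᵢ]`; since `u` is centred and independent of `(fᵢ, ξ)`, the
substituted term contributes nothing. The noise `v` is centred and independent of `ū`, so
`E[d ū] = (1 - p) R_u wᵒ`. The rest is matrix algebra: `R_ū = R_u (I + B)` with `B = R_u⁻¹ R_r`,
hence `R_ū⁻¹ R_u = (I + B)⁻¹ = I - B (I + B)⁻¹`.
-/

open MeasureTheory ProbabilityTheory Matrix
open scoped Matrix

/-- Index type for the mutually independent sources: the `M` indicator variables `fʲ`,
the regressor `u`, and the perturbation `ξ`. -/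
inductive MissIdx (M : ℕ) where
  | F : Fin M → MissIdx M
  | U : MissIdx M
  | Xi : MissIdx M

/-- Codomain of each of the independent sources. -/
def MissIdx.type (M : ℕ) : MissIdx M → Type
  | .F _ => ℝ
  | .U => Fin M → ℝ
  | .Xi => Fin M → ℝ

instance (M : ℕ) (i : MissIdx M) : MeasurableSpace (MissIdx.type M i) :=
  match i with
  | .F _ => (inferInstance : MeasurableSpace ℝ)
  | .U => (inferInstance : MeasurableSpace (Fin M → ℝ))
  | .Xi => (inferInstance : MeasurableSpace (Fin M → ℝ))

/-- The family of random variables indexed by `MissIdx`. -/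
def missFun {Ω : Type*} (M : ℕ) (f : Fin M → Ω → ℝ) (u ξ : Ω → Fin M → ℝ) :
    (i : MissIdx M) → Ω → MissIdx.type M i
  | .F j => f j
  | .U => u
  | .Xi => ξ

/-- The censored regressor `ū = (I_M − F)u + Fξ`. -/
noncomputable def censReg {Ω : Type*} (M : ℕ) (f : Fin M → Ω → ℝ) (u ξ : Ω → Fin M → ℝ)
    (ω : Ω) : Fin M → ℝ :=
  ((1 : Matrix (Fin M) (Fin M) ℝ) - Matrix.diagonal (fun k => f k ω)) *ᵥ u ω
    + (Matrix.diagonal (fun k => f k ω)) *ᵥ ξ ω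

/-- The all-ones matrix `𝟙𝟙ᵀ`. -/
noncomputable def onesMat (M : ℕ) : Matrix (Fin M) (Fin M) ℝ := Matrix.of fun _ _ => (1 : ℝ)

/-- The matrix `P₁ = (2p−p²)𝟙𝟙ᵀ − (p−p²)I_M`. -/
noncomputable def Pone (M : ℕ) (p : ℝ) : Matrix (Fin M) (Fin M) ℝ :=
  (2 * p - p ^ 2) • onesMat M - (p - p ^ 2) • (1 : Matrix (Fin M) (Fin M) ℝ)

/-- The matrix `R_r := −P₁ ⊙ R_u + p σ_ξ² I_M`. -/
noncomputable def Rr (M : ℕ) (p σξ : ℝ) (Ru : Matrix (Fin M) (Fin M) ℝ) :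
    Matrix (Fin M) (Fin M) ℝ :=
  -Matrix.hadamard (Pone M p) Ru + (p * σξ ^ 2) • (1 : Matrix (Fin M) (Fin M) ℝ)

namespace Matrix

variable {n α : Type*} [Fintype n] [DecidableEq n] [CommRing α] {A R : Matrix n n α}

lemma one_add_inv_mul_eq (hA : IsUnit A) : 1 + A⁻¹ * R = A⁻¹ * (A + R) := by
  rw [mul_add, nonsing_inv_mul A ((isUnit_iff_isUnit_det A).mp hA)]

lemma isUnit_one_add_inv_mul (hA : IsUnit A) (hAR : IsUnit (A + R)) : IsUnit (1 + A⁻¹ * R) := by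
  rw [one_add_inv_mul_eq hA]
  exact (isUnit_nonsing_inv_iff.mpr hA).mul hAR

lemma inv_add_mul_self (hA : IsUnit A) (hAR : IsUnit (A + R)) :
    (A + R)⁻¹ * A = 1 - A⁻¹ * R * (1 + A⁻¹ * R)⁻¹ := by
  have hAdet := (isUnit_iff_isUnit_det A).mp hA
  have hB := (isUnit_iff_isUnit_det _).mp (isUnit_one_add_inv_mul hA hAR)
  calc (A + R)⁻¹ * A = (1 + A⁻¹ * R)⁻¹ := by
        rw [one_add_inv_mul_eq hA, mul_inv_rev, nonsing_inv_nonsing_inv _ hAdet]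
    _ = (1 + A⁻¹ * R) * (1 + A⁻¹ * R)⁻¹ - A⁻¹ * R * (1 + A⁻¹ * R)⁻¹ := by
        rw [add_mul, one_mul, add_sub_cancel_right]
    _ = 1 - A⁻¹ * R * (1 + A⁻¹ * R)⁻¹ := by rw [mul_nonsing_inv _ hB]

end Matrix

section ZeroOneValued

variable {Ω : Type*} {f : Ω → ℝ}

lemma eq_indicator_one_of_forall_eq_zero_or_one (h : ∀ ω, f ω = 0 ∨ f ω = 1) :
    f = {ω | f ω = 1}.indicator 1 := by
  funext ω
  rcases h ω with h | h <;> simp [h]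

variable [MeasurableSpace Ω] {μ : Measure Ω}

lemma integrable_of_forall_eq_zero_or_one [IsFiniteMeasure μ] (hf : Measurable f)
    (h : ∀ ω, f ω = 0 ∨ f ω = 1) : Integrable f μ := by
  rw [eq_indicator_one_of_forall_eq_zero_or_one h]
  exact (integrable_const 1).indicator (hf (measurableSet_singleton 1))

lemma integral_eq_measureReal_of_forall_eq_zero_or_one (hf : Measurable f)
    (h : ∀ ω, f ω = 0 ∨ f ω = 1) : ∫ ω, f ω ∂μ = μ.real {ω | f ω = 1} := by
  conv_lhs => rw [eq_indicator_one_of_forall_eq_zero_or_one h]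
  exact integral_indicator_one (hf (measurableSet_singleton 1))

end ZeroOneValued

section CensoredRegressor

variable {Ω : Type*} {M : ℕ} {f : Fin M → Ω → ℝ} {u ξ : Ω → Fin M → ℝ}

lemma censReg_apply (ω : Ω) (i : Fin M) :
    censReg M f u ξ ω i = (1 - f i ω) * u ω i + f i ω * ξ ω i := by
  simp only [censReg, sub_mulVec, one_mulVec, Pi.add_apply, Pi.sub_apply, mulVec_diagonal]
  ring

variable [MeasurableSpace Ω] {μ : Measure Ω}

lemma measurable_missFun (hf : ∀ j, Measurable (f j)) (hu : Measurable u) (hξ : Measurable ξ) :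
    ∀ i, Measurable (missFun M f u ξ i)
  | .F j => hf j
  | .U => hu
  | .Xi => hξ

lemma measurable_censReg_apply (hf : ∀ j, Measurable (f j)) (hu : Measurable u)
    (hξ : Measurable ξ) (i : Fin M) : Measurable fun ω => censReg M f u ξ ω i := by
  simp only [censReg_apply]
  fun_prop

lemma integrable_censReg_apply (hf : ∀ j, Measurable (f j)) (hu : Measurable u)
    (hξ : Measurable ξ) {i : Fin M} (hf01 : ∀ ω, f i ω = 0 ∨ f i ω = 1)
    (hui : Integrable (fun ω => u ω i) μ) (hξi : Integrable (fun ω => ξ ω i) μ) :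
    Integrable (fun ω => censReg M f u ξ ω i) μ := by
  refine (hui.norm.add hξi.norm).mono'
    (measurable_censReg_apply hf hu hξ i).aestronglyMeasurable (ae_of_all _ fun ω => ?_)
  rcases hf01 ω with h | h <;> simp [censReg_apply, h]

lemma indepFun_regressor_mul_one_sub_indicator (hindep : iIndepFun (missFun M f u ξ) μ)
    (i j k : Fin M) : IndepFun (fun ω => u ω j * u ω k) (fun ω => 1 - f i ω) μ :=
  (hindep.indepFun (i := .U) (j := .F i) nofun).comp
    (φ := fun x : Fin M → ℝ => x j * x k) (ψ := fun t : ℝ => 1 - t) (by fun_prop) (by fun_prop)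

lemma indepFun_regressor_indicator_mul_perturbation (hindep : iIndepFun (missFun M f u ξ) μ)
    (hf : ∀ j, Measurable (f j)) (hu : Measurable u) (hξ : Measurable ξ) (i j : Fin M) :
    IndepFun (fun ω => u ω j) (fun ω => f i ω * ξ ω i) μ :=
  (hindep.indepFun_prodMk (measurable_missFun hf hu hξ) (.F i) .Xi .U nofun nofun).symm.comp
    (φ := fun x : Fin M → ℝ => x j) (ψ := fun t : ℝ × (Fin M → ℝ) => t.1 * t.2 i)
    (by fun_prop) (by fun_prop)

lemma integrable_indicator_mul_perturbation [IsFiniteMeasure μ]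
    (hindep : iIndepFun (missFun M f u ξ) μ) (hf : ∀ j, Measurable (f j)) {i : Fin M}
    (hf01 : ∀ ω, f i ω = 0 ∨ f i ω = 1) (hξi : Integrable (fun ω => ξ ω i) μ) :
    Integrable (fun ω => f i ω * ξ ω i) μ := by
  have h : IndepFun (f i) ξ μ := hindep.indepFun (i := .F i) (j := .Xi) nofun
  exact (h.comp measurable_id (measurable_pi_apply i)).integrable_mul
    (integrable_of_forall_eq_zero_or_one (hf i) hf01) hξi

lemma integrable_mul_censReg_apply_and_integral_eq [IsProbabilityMeasure μ]
    (hindep : iIndepFun (missFun M f u ξ) μ) (hf : ∀ j, Measurable (f j)) (hu : Measurable u)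
    (hξ : Measurable ξ) {i j : Fin M} (hf01 : ∀ ω, f i ω = 0 ∨ f i ω = 1)
    (hui : MemLp (fun ω => u ω i) 2 μ) (huj : MemLp (fun ω => u ω j) 2 μ)
    (hξi : Integrable (fun ω => ξ ω i) μ) (hujmean : ∫ ω, u ω j ∂μ = 0) :
    Integrable (fun ω => u ω j * censReg M f u ξ ω i) μ ∧
      ∫ ω, u ω j * censReg M f u ξ ω i ∂μ = (1 - ∫ ω, f i ω ∂μ) * ∫ ω, u ω j * u ω i ∂μ := by
  have hsplit : (fun ω => u ω j * censReg M f u ξ ω i) =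
      fun ω => u ω j * u ω i * (1 - f i ω) + u ω j * (f i ω * ξ ω i) := by
    funext ω
    rw [censReg_apply]
    ring
  have hindep₁ := indepFun_regressor_mul_one_sub_indicator hindep i j i
  have hindep₂ := indepFun_regressor_indicator_mul_perturbation hindep hf hu hξ i j
  have hfi : Integrable (f i) μ := integrable_of_forall_eq_zero_or_one (hf i) hf01
  have huu : Integrable (fun ω => u ω j * u ω i) μ := huj.integrable_mul hui
  have h1f : Integrable (fun ω => 1 - f i ω) μ := (integrable_const 1).sub hfi
  have huj' : Integrable (fun ω => u ω j) μ := huj.integrable one_le_two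
  have hfξ := integrable_indicator_mul_perturbation hindep hf hf01 hξi
  have hI₁ : Integrable (fun ω => u ω j * u ω i * (1 - f i ω)) μ :=
    hindep₁.integrable_mul huu h1f
  have hI₂ : Integrable (fun ω => u ω j * (f i ω * ξ ω i)) μ := hindep₂.integrable_mul huj' hfξ
  have hE₁ : ∫ ω, u ω j * u ω i * (1 - f i ω) ∂μ =
      (∫ ω, u ω j * u ω i ∂μ) * ∫ ω, 1 - f i ω ∂μ :=
    hindep₁.integral_mul_eq_mul_integral huu.aestronglyMeasurable h1f.aestronglyMeasurable
  have hE₂ : ∫ ω, u ω j * (f i ω * ξ ω i) ∂μ = (∫ ω, u ω j ∂μ) * ∫ ω, f i ω * ξ ω i ∂μ :=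
    hindep₂.integral_mul_eq_mul_integral huj'.aestronglyMeasurable hfξ.aestronglyMeasurable
  rw [hsplit]
  refine ⟨hI₁.add hI₂, ?_⟩
  rw [integral_add hI₁ hI₂, hE₁, hE₂, integral_sub (integrable_const 1) hfi, hujmean]
  simp only [integral_const, probReal_univ, smul_eq_mul, one_mul, zero_mul, add_zero]
  ring

end CensoredRegressor

section MomentVector

variable {Ω β : Type*} [MeasurableSpace Ω] [MeasurableSpace β] {μ : Measure Ω} {M : ℕ}
  {f : Fin M → Ω → ℝ} {u ξ : Ω → Fin M → ℝ}

lemma indepFun_censReg_apply {v : Ω → β}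
    (hvindep : IndepFun (fun ω => (u ω, (fun j => f j ω), ξ ω)) v μ) (i : Fin M) :
    IndepFun (fun ω => censReg M f u ξ ω i) v μ := by
  have h : (fun ω => censReg M f u ξ ω i) =
      (fun t : (Fin M → ℝ) × (Fin M → ℝ) × (Fin M → ℝ) =>
        (1 - t.2.1 i) * t.1 i + t.2.1 i * t.2.2 i) ∘ fun ω => (u ω, (fun j => f j ω), ξ ω) :=
    funext fun ω => censReg_apply ω i
  rw [h]
  exact hvindep.comp (by fun_prop) measurable_id

lemma integral_mul_censReg_eq_smul_mulVec [IsProbabilityMeasure μ] {p : ℝ}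
    (hindep : iIndepFun (missFun M f u ξ) μ) (hf : ∀ j, Measurable (f j)) (hu : Measurable u)
    (hξ : Measurable ξ) (hf01 : ∀ j ω, f j ω = 0 ∨ f j ω = 1) (hfint : ∀ j, ∫ ω, f j ω ∂μ = p)
    (huL2 : ∀ i, MemLp (fun ω => u ω i) 2 μ) (hξint : ∀ i, Integrable (fun ω => ξ ω i) μ)
    (humean : ∀ i, ∫ ω, u ω i ∂μ = 0) {Ru : Matrix (Fin M) (Fin M) ℝ}
    (hRu : ∀ i j, Ru i j = ∫ ω, u ω i * u ω j ∂μ) {w : Fin M → ℝ} {v d : Ω → ℝ}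
    (hvint : Integrable v μ) (hvmean : ∫ ω, v ω ∂μ = 0)
    (hvindep : IndepFun (fun ω => (u ω, (fun j => f j ω), ξ ω)) v μ)
    (hd : ∀ ω, d ω = u ω ⬝ᵥ w + v ω) :
    (fun i => ∫ ω, d ω * censReg M f u ξ ω i ∂μ) = (1 - p) • (Ru *ᵥ w) := by
  funext i
  have hmoment j := integrable_mul_censReg_apply_and_integral_eq hindep hf hu hξ (hf01 i)
    (huL2 i) (huL2 j) (hξint i) (humean j)
  have hindepv := indepFun_censReg_apply hvindep i
  have hcensv : Integrable (fun ω => censReg M f u ξ ω i * v ω) μ :=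
    hindepv.integrable_mul (integrable_censReg_apply hf hu hξ (hf01 i)
      ((huL2 i).integrable one_le_two) (hξint i)) hvint
  have hnoise : ∫ ω, censReg M f u ξ ω i * v ω ∂μ = 0 := by
    rw [← mul_zero (∫ ω, censReg M f u ξ ω i ∂μ), ← hvmean]
    exact hindepv.integral_mul_eq_mul_integral
      (measurable_censReg_apply hf hu hξ i).aestronglyMeasurable hvint.aestronglyMeasurable
  have hsplit : (fun ω => d ω * censReg M f u ξ ω i) = fun ω =>
      ∑ j, w j * (u ω j * censReg M f u ξ ω i) + censReg M f u ξ ω i * v ω := by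
    funext ω
    rw [hd, dotProduct, add_mul, Finset.sum_mul]
    exact congrArg₂ (· + ·) (Finset.sum_congr rfl fun j _ => by ring) (mul_comm _ _)
  have hsum : ∀ j ∈ Finset.univ, Integrable (fun ω => w j * (u ω j * censReg M f u ξ ω i)) μ :=
    fun j _ => (hmoment j).1.const_mul (w j)
  rw [hsplit, integral_add (integrable_finsetSum _ hsum) hcensv, integral_finsetSum _ hsum,
    hnoise, add_zero]
  simp only [integral_const_mul, (hmoment _).2, hfint, Pi.smul_apply, mulVec, dotProduct, hRu,
    smul_eq_mul, Finset.mul_sum]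
  refine Finset.sum_congr rfl fun j _ => ?_
  simp only [mul_comm (u _ j)]
  ring

end MomentVector

theorem censored_estimate_bias_general
    {Ω : Type*} [MeasurableSpace Ω] (μ : Measure Ω) [IsProbabilityMeasure μ]
    (M : ℕ) (p : ℝ) (hp0 : 0 ≤ p) (σξ : ℝ)
    (u ξ : Ω → Fin M → ℝ) (f : Fin M → Ω → ℝ)
    (humeas : Measurable u) (hξmeas : Measurable ξ) (hfmeas : ∀ j, Measurable (f j))
    (huL2 : ∀ i, MemLp (fun ω => u ω i) 2 μ) (hξL2 : ∀ i, MemLp (fun ω => ξ ω i) 2 μ)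
    (humean : ∀ i, ∫ ω, u ω i ∂μ = 0)
    (Ru : Matrix (Fin M) (Fin M) ℝ)
    (hRu : ∀ i j, Ru i j = ∫ ω, u ω i * u ω j ∂μ)
    (hf01 : ∀ j ω, f j ω = 0 ∨ f j ω = 1)
    (hfp : ∀ j, μ {ω | f j ω = 1} = ENNReal.ofReal p)
    (hindep : iIndepFun (missFun M f u ξ) μ)
    (wo : Fin M → ℝ) (v : Ω → ℝ)
    (hvL2 : MemLp v 2 μ)
    (hvmean : ∫ ω, v ω ∂μ = 0)
    (hvindep : IndepFun (fun ω => (u ω, (fun j => f j ω), ξ ω)) v μ)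
    (d : Ω → ℝ) (hd : ∀ ω, d ω = u ω ⬝ᵥ wo + v ω)
    -- invertibility assumptions
    (hRuUnit : IsUnit Ru)
    (hRubarUnit : IsUnit (Ru + Rr M p σξ Ru)) :
    IsUnit ((1 : Matrix (Fin M) (Fin M) ℝ) + Ru⁻¹ * Rr M p σξ Ru)
    ∧ (Ru + Rr M p σξ Ru)⁻¹ *ᵥ (fun i => ∫ ω, d ω * censReg M f u ξ ω i ∂μ)
        = (1 - p) • ((1 - Ru⁻¹ * Rr M p σξ Ru *
            ((1 : Matrix (Fin M) (Fin M) ℝ) + Ru⁻¹ * Rr M p σξ Ru)⁻¹) *ᵥ wo) := by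
  have hfint (j : Fin M) : ∫ ω, f j ω ∂μ = p := by
    rw [integral_eq_measureReal_of_forall_eq_zero_or_one (hfmeas j) (hf01 j), measureReal_def,
      hfp j, ENNReal.toReal_ofReal hp0]
  refine ⟨isUnit_one_add_inv_mul hRuUnit hRubarUnit, ?_⟩
  rw [integral_mul_censReg_eq_smul_mulVec hindep hfmeas humeas hξmeas hf01 hfint huL2
      (fun i => (hξL2 i).integrable one_le_two) humean hRu (hvL2.integrable one_le_two) hvmean
      hvindep hd,
    mulVec_smul, mulVec_mulVec, inv_add_mul_self hRuUnit hRubarUnit]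

/-- if `R_u` and `R_ū = R_u + R_r` are invertible, then `I_M + R_u⁻¹ R_r` is
invertible and the estimate computed from censored moments is biased:
`w̄ᵒ := R_ū⁻¹ E[d·ū] = (1−p)(I_M − Q) wᵒ` with `Q = R_u⁻¹ R_r (I_M + R_u⁻¹ R_r)⁻¹`. -/
theorem censored_estimate_bias
    {Ω : Type*} [MeasurableSpace Ω] (μ : Measure Ω) [IsProbabilityMeasure μ]
    (M : ℕ) (p : ℝ) (hp0 : 0 ≤ p) (hp1 : p < 1) (σξ : ℝ) (hσξ : 0 ≤ σξ)
    (u ξ : Ω → Fin M → ℝ) (f : Fin M → Ω → ℝ)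
    (humeas : Measurable u) (hξmeas : Measurable ξ) (hfmeas : ∀ j, Measurable (f j))
    (huL2 : ∀ i, MemLp (fun ω => u ω i) 2 μ) (hξL2 : ∀ i, MemLp (fun ω => ξ ω i) 2 μ)
    (humean : ∀ i, ∫ ω, u ω i ∂μ = 0) (hξmean : ∀ i, ∫ ω, ξ ω i ∂μ = 0)
    (Ru : Matrix (Fin M) (Fin M) ℝ)
    (hRu : ∀ i j, Ru i j = ∫ ω, u ω i * u ω j ∂μ)
    (hξcov : ∀ i j, ∫ ω, ξ ω i * ξ ω j ∂μ = if i = j then σξ ^ 2 else 0)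
    (hf01 : ∀ j ω, f j ω = 0 ∨ f j ω = 1)
    (hfp : ∀ j, μ {ω | f j ω = 1} = ENNReal.ofReal p)
    (hindep : iIndepFun (missFun M f u ξ) μ)
    (wo : Fin M → ℝ) (v : Ω → ℝ) (σv : ℝ)
    (hvmeas : Measurable v) (hvL2 : MemLp v 2 μ)
    (hvmean : ∫ ω, v ω ∂μ = 0) (hvvar : ∫ ω, (v ω) ^ 2 ∂μ = σv ^ 2)
    (hvindep : IndepFun (fun ω => (u ω, (fun j => f j ω), ξ ω)) v μ)
    (d : Ω → ℝ) (hd : ∀ ω, d ω = u ω ⬝ᵥ wo + v ω)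
    -- invertibility assumptions
    (hRuUnit : IsUnit Ru)
    (hRubar : (Matrix.of fun i j => ∫ ω, censReg M f u ξ ω i * censReg M f u ξ ω j ∂μ)
        = Ru + Rr M p σξ Ru)
    (hRubarUnit : IsUnit (Ru + Rr M p σξ Ru)) :
    IsUnit ((1 : Matrix (Fin M) (Fin M) ℝ) + Ru⁻¹ * Rr M p σξ Ru)
    ∧ (Ru + Rr M p σξ Ru)⁻¹ *ᵥ (fun i => ∫ ω, d ω * censReg M f u ξ ω i ∂μ)
        = (1 - p) • ((1 - Ru⁻¹ * Rr M p σξ Ru *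
            ((1 : Matrix (Fin M) (Fin M) ℝ) + Ru⁻¹ * Rr M p σξ Ru)⁻¹) *ᵥ wo) :=
  censored_estimate_bias_general μ M p hp0 σξ u ξ f humeas hξmeas hfmeas huL2 hξL2 humean Ru hRu
    hf01 hfp hindep wo v hvL2 hvmean hvindep d hd hRuUnit hRubarUnit
end

section
/- If the covariance matrix R_u is diagonal, then E[((u − ξ)ᵀ F wᵒ)²] = p (wᵒ)ᵀ R_u wᵒ + p σ_ξ² ‖wᵒ‖², and consequently the noise variance can be expressed as σ_v² = E[(d − ūᵀ wᵒ)²] − p (wᵒ)ᵀ R_u wᵒ − p σ_ξ² ‖wᵒ‖². -/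
open MeasureTheory ProbabilityTheory Matrix
open scoped Matrix

/-! Write `X = F (u - ξ)` (`maskedDiff`), so that `(u - ξ)ᵀ F wᵒ = Xᵀ wᵒ` and
`d - ūᵀ wᵒ = v + Xᵀ wᵒ`. The masks are independent of `(u, ξ)`, and `ξ` is centred and
independent of `u`, so `E[Xⱼ Xₖ] = E[fʲ fᵏ] (R_u + σ_ξ² I)ⱼₖ`; for diagonal `R_u` only `j = k`
survives, and there `E[(fʲ)²] = E[fʲ] = p`. The second identity follows since `v` is centred and
independent of `X`. -/

open Finset

section Moments

variable {Ω : Type*} [MeasurableSpace Ω] {μ : Measure Ω}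

lemma integral_eq_measureReal_of_zero_or_one {f : Ω → ℝ} (hf : Measurable f)
    (h01 : ∀ ω, f ω = 0 ∨ f ω = 1) : ∫ ω, f ω ∂μ = μ.real {ω | f ω = 1} := by
  have hind : f = {ω | f ω = 1}.indicator (fun _ => 1) := by
    ext ω
    rcases h01 ω with h | h <;> simp [h]
  have hs : MeasurableSet {ω | f ω = 1} := hf (measurableSet_singleton 1)
  conv_lhs => rw [hind]
  rw [integral_indicator_const _ hs, smul_eq_mul, mul_one]

lemma integral_sq_dotProduct {ι : Type*} [Fintype ι] {X : Ω → ι → ℝ}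
    (hX : ∀ i, MemLp (fun ω => X ω i) 2 μ) (c : ι → ℝ) :
    ∫ ω, (X ω ⬝ᵥ c) ^ 2 ∂μ = c ⬝ᵥ (of (fun i j => ∫ ω, X ω i * X ω j ∂μ) *ᵥ c) := by
  have hint : ∀ i j, Integrable (fun ω => c i * c j * (X ω i * X ω j)) μ :=
    fun i j => ((hX i).integrable_mul (hX j)).const_mul _
  have hexpand : ∀ ω, (X ω ⬝ᵥ c) ^ 2 = ∑ i, ∑ j, c i * c j * (X ω i * X ω j) := by
    intro ω
    simp only [dotProduct, sq, sum_mul_sum]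
    exact sum_congr rfl fun i _ => sum_congr rfl fun j _ => by ring
  simp_rw [hexpand]
  rw [integral_finsetSum _ fun i _ => integrable_finsetSum _ fun j _ => hint i j]
  simp_rw [integral_finsetSum _ fun j _ => hint _ j, integral_const_mul]
  simp only [dotProduct, mulVec, of_apply, mul_sum]
  exact sum_congr rfl fun i _ => sum_congr rfl fun j _ => by ring

lemma integral_add_sq_of_indepFun {X Y : Ω → ℝ} (hX : MemLp X 2 μ) (hY : MemLp Y 2 μ)
    (hXY : IndepFun X Y μ) (hX0 : ∫ ω, X ω ∂μ = 0) :
    ∫ ω, (X ω + Y ω) ^ 2 ∂μ = ∫ ω, X ω ^ 2 ∂μ + ∫ ω, Y ω ^ 2 ∂μ := by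
  have hcross : ∫ ω, X ω * Y ω ∂μ = 0 := by
    rw [hXY.integral_fun_mul_eq_mul_integral hX.1 hY.1, hX0, zero_mul]
  have hX2 : Integrable (fun ω => X ω ^ 2) μ := hX.integrable_sq
  have hY2 : Integrable (fun ω => Y ω ^ 2) μ := hY.integrable_sq
  have hsq : Integrable (fun ω => X ω ^ 2 + Y ω ^ 2) μ := hX2.add hY2
  have hXY2 : Integrable (fun ω => 2 * (X ω * Y ω)) μ := (hX.integrable_mul hY).const_mul 2
  calc ∫ ω, (X ω + Y ω) ^ 2 ∂μ = ∫ ω, X ω ^ 2 + Y ω ^ 2 + 2 * (X ω * Y ω) ∂μ := by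
        congr with ω; ring
    _ = ∫ ω, X ω ^ 2 ∂μ + ∫ ω, Y ω ^ 2 ∂μ := by
        rw [integral_add hsq hXY2, integral_add hX2 hY2, integral_const_mul, hcross,
          mul_zero, add_zero]

lemma integral_sub_mul_sub_of_indepFun {ι : Type*} {u ξ : Ω → ι → ℝ} (huξ : IndepFun u ξ μ)
    (hu : ∀ i, MemLp (fun ω => u ω i) 2 μ) (hξ : ∀ i, MemLp (fun ω => ξ ω i) 2 μ)
    (hξ0 : ∀ i, ∫ ω, ξ ω i ∂μ = 0) (i j : ι) :
    ∫ ω, (u ω i - ξ ω i) * (u ω j - ξ ω j) ∂μ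
      = ∫ ω, u ω i * u ω j ∂μ + ∫ ω, ξ ω i * ξ ω j ∂μ := by
  have hcross : ∀ i j, ∫ ω, u ω i * ξ ω j ∂μ = 0 := fun i j => by
    have h : IndepFun (fun ω => u ω i) (fun ω => ξ ω j) μ :=
      huξ.comp (measurable_pi_apply i) (measurable_pi_apply j)
    rw [h.integral_fun_mul_eq_mul_integral (hu i).1 (hξ j).1, hξ0 j, mul_zero]
  have huu : Integrable (fun ω => u ω i * u ω j) μ := (hu i).integrable_mul (hu j)
  have huξ' : Integrable (fun ω => u ω i * ξ ω j) μ := (hu i).integrable_mul (hξ j)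
  have hξu : Integrable (fun ω => u ω j * ξ ω i) μ := (hu j).integrable_mul (hξ i)
  have hξξ : Integrable (fun ω => ξ ω i * ξ ω j) μ := (hξ i).integrable_mul (hξ j)
  have h₁ : Integrable (fun ω => u ω i * u ω j - u ω i * ξ ω j) μ := huu.sub huξ'
  have h₂ : Integrable (fun ω => u ω i * u ω j - u ω i * ξ ω j - u ω j * ξ ω i) μ := h₁.sub hξu
  calc ∫ ω, (u ω i - ξ ω i) * (u ω j - ξ ω j) ∂μ
      = ∫ ω, u ω i * u ω j - u ω i * ξ ω j - u ω j * ξ ω i + ξ ω i * ξ ω j ∂μ := by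
        congr with ω; ring
    _ = ∫ ω, u ω i * u ω j ∂μ + ∫ ω, ξ ω i * ξ ω j ∂μ := by
        rw [integral_add h₂ hξξ, integral_sub h₁ hξu,
          integral_sub huu huξ', hcross, hcross, sub_zero, sub_zero]

lemma MemLp.mul_of_zero_or_one {p : ENNReal} {g b : Ω → ℝ} (hg : MemLp g p μ) (hb : Measurable b)
    (h01 : ∀ ω, b ω = 0 ∨ b ω = 1) : MemLp (fun ω => g ω * b ω) p μ := by
  have hb_top : MemLp b ⊤ μ :=
    memLp_top_of_bound hb.aestronglyMeasurable 1 <| .of_forall fun ω => by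
      rcases h01 ω with h | h <;> simp [h]
  simpa only [mul_comm] using hg.mul' hb_top

end Moments

noncomputable def maskedDiff {Ω : Type*} (M : ℕ) (f : Fin M → Ω → ℝ) (u ξ : Ω → Fin M → ℝ)
    (ω : Ω) : Fin M → ℝ :=
  (u ω - ξ ω) ᵥ* diagonal (fun k => f k ω)

section Censoring

variable {Ω : Type*} {M : ℕ} {f : Fin M → Ω → ℝ} {u ξ : Ω → Fin M → ℝ}

@[simp]
lemma maskedDiff_apply (ω : Ω) (j : Fin M) : maskedDiff M f u ξ ω j = (u ω j - ξ ω j) * f j ω := by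
  simp [maskedDiff, vecMul_diagonal]

lemma dotProduct_diagonal_mulVec_eq_maskedDiff (ω : Ω) (w : Fin M → ℝ) :
    (u ω - ξ ω) ⬝ᵥ (diagonal (fun k => f k ω) *ᵥ w) = maskedDiff M f u ξ ω ⬝ᵥ w :=
  dotProduct_mulVec _ _ _

lemma dotProduct_sub_censReg_dotProduct (ω : Ω) (w : Fin M → ℝ) :
    u ω ⬝ᵥ w - censReg M f u ξ ω ⬝ᵥ w = maskedDiff M f u ξ ω ⬝ᵥ w := by
  simp only [censReg, maskedDiff_apply, dotProduct, sub_mulVec, one_mulVec, mulVec_diagonal,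
    Pi.add_apply, Pi.sub_apply, ← sum_sub_distrib]
  exact sum_congr rfl fun i _ => by ring

variable [MeasurableSpace Ω] {μ : Measure Ω}

lemma memLp_maskedDiff (hf : ∀ j, Measurable (f j)) (hf01 : ∀ j ω, f j ω = 0 ∨ f j ω = 1)
    (huL2 : ∀ i, MemLp (fun ω => u ω i) 2 μ) (hξL2 : ∀ i, MemLp (fun ω => ξ ω i) 2 μ)
    (j : Fin M) : MemLp (fun ω => maskedDiff M f u ξ ω j) 2 μ := by
  simpa only [maskedDiff_apply, Pi.sub_apply] using
    MemLp.mul_of_zero_or_one ((huL2 j).sub (hξL2 j)) (hf j) (hf01 j)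

lemma indepFun_maskedDiff_dotProduct {v : Ω → ℝ}
    (hv : IndepFun (fun ω => (u ω, (fun j => f j ω), ξ ω)) v μ) (w : Fin M → ℝ) :
    IndepFun v (fun ω => maskedDiff M f u ξ ω ⬝ᵥ w) μ := by
  have hφ : Measurable fun q : (Fin M → ℝ) × (Fin M → ℝ) × (Fin M → ℝ) =>
      (q.1 - q.2.2) ᵥ* diagonal q.2.1 ⬝ᵥ w := by
    simp only [dotProduct, vecMul_diagonal, Pi.sub_apply]
    fun_prop
  exact (hv.comp hφ measurable_id).symm

lemma integral_maskedDiff_mul_maskedDiff (hindep : iIndepFun (missFun M f u ξ) μ)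
    (hf : ∀ j, Measurable (f j)) (hu : Measurable u) (hξ : Measurable ξ)
    (huL2 : ∀ i, MemLp (fun ω => u ω i) 2 μ) (hξL2 : ∀ i, MemLp (fun ω => ξ ω i) 2 μ)
    (hξ0 : ∀ i, ∫ ω, ξ ω i ∂μ = 0) (j k : Fin M) :
    ∫ ω, maskedDiff M f u ξ ω j * maskedDiff M f u ξ ω k ∂μ
      = (∫ ω, f j ω * f k ω ∂μ) * (∫ ω, u ω j * u ω k ∂μ + ∫ ω, ξ ω j * ξ ω k ∂μ) := by
  have hmeas : ∀ i, Measurable (missFun M f u ξ i)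
    | .F j => hf j
    | .U => hu
    | .Xi => hξ
  have hpair : IndepFun (fun ω => (f j ω, f k ω)) (fun ω => (u ω, ξ ω)) μ :=
    hindep.indepFun_prodMk_prodMk hmeas (.F j) (.F k) .U .Xi nofun nofun nofun nofun
  have hprod := hpair.integral_fun_comp_mul_comp (f := fun a : ℝ × ℝ => a.1 * a.2)
    (g := fun x : (Fin M → ℝ) × (Fin M → ℝ) => (x.1 j - x.2 j) * (x.1 k - x.2 k))
    (by fun_prop) (by fun_prop) (by fun_prop) (by fun_prop)
  have huξ : IndepFun u ξ μ := hindep.indepFun (i := .U) (j := .Xi) nofun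
  rw [← integral_sub_mul_sub_of_indepFun huξ huL2 hξL2 hξ0, ← hprod]
  congr with ω
  simp only [maskedDiff_apply]
  ring

lemma secondMoment_maskedDiff_of_isDiag (hindep : iIndepFun (missFun M f u ξ) μ)
    (hf : ∀ j, Measurable (f j)) (hu : Measurable u) (hξ : Measurable ξ)
    (huL2 : ∀ i, MemLp (fun ω => u ω i) 2 μ) (hξL2 : ∀ i, MemLp (fun ω => ξ ω i) 2 μ)
    (hξ0 : ∀ i, ∫ ω, ξ ω i ∂μ = 0) {Ru : Matrix (Fin M) (Fin M) ℝ}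
    (hRu : ∀ i j, Ru i j = ∫ ω, u ω i * u ω j ∂μ) (hRudiag : Ru.IsDiag) {σξ : ℝ}
    (hξcov : ∀ i j, ∫ ω, ξ ω i * ξ ω j ∂μ = if i = j then σξ ^ 2 else 0)
    (hf01 : ∀ j ω, f j ω = 0 ∨ f j ω = 1) {p : ℝ} (hfmean : ∀ j, ∫ ω, f j ω ∂μ = p) :
    of (fun j k => ∫ ω, maskedDiff M f u ξ ω j * maskedDiff M f u ξ ω k ∂μ)
      = p • (Ru + σξ ^ 2 • 1) := by
  ext j k
  rw [of_apply, integral_maskedDiff_mul_maskedDiff hindep hf hu hξ huL2 hξL2 hξ0, ← hRu, hξcov]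
  by_cases hjk : j = k
  · subst hjk
    have hidem : ∀ ω, f j ω * f j ω = f j ω := fun ω => by rcases hf01 j ω with h | h <;> simp [h]
    simp [hidem, hfmean]
  · simp [hjk, hRudiag hjk]

end Censoring

theorem noise_variance_expression_diagonal_general
    {Ω : Type*} [MeasurableSpace Ω] (μ : Measure Ω)
    (M : ℕ) (p : ℝ) (hp0 : 0 ≤ p) (σξ : ℝ)
    (u ξ : Ω → Fin M → ℝ) (f : Fin M → Ω → ℝ)
    (humeas : Measurable u) (hξmeas : Measurable ξ) (hfmeas : ∀ j, Measurable (f j))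
    (huL2 : ∀ i, MemLp (fun ω => u ω i) 2 μ) (hξL2 : ∀ i, MemLp (fun ω => ξ ω i) 2 μ)
    (hξmean : ∀ i, ∫ ω, ξ ω i ∂μ = 0)
    (Ru : Matrix (Fin M) (Fin M) ℝ)
    (hRu : ∀ i j, Ru i j = ∫ ω, u ω i * u ω j ∂μ)
    (hRudiag : Ru.IsDiag)
    (hξcov : ∀ i j, ∫ ω, ξ ω i * ξ ω j ∂μ = if i = j then σξ ^ 2 else 0)
    (hf01 : ∀ j ω, f j ω = 0 ∨ f j ω = 1)
    (hfp : ∀ j, μ {ω | f j ω = 1} = ENNReal.ofReal p)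
    (hindep : iIndepFun (missFun M f u ξ) μ)
    (wo : Fin M → ℝ) (v : Ω → ℝ) (σv : ℝ)
    (hvL2 : MemLp v 2 μ)
    (hvmean : ∫ ω, v ω ∂μ = 0) (hvvar : ∫ ω, (v ω) ^ 2 ∂μ = σv ^ 2)
    (hvindep : IndepFun (fun ω => (u ω, (fun j => f j ω), ξ ω)) v μ)
    (d : Ω → ℝ) (hd : ∀ ω, d ω = u ω ⬝ᵥ wo + v ω) :
    (∫ ω, ((u ω - ξ ω) ⬝ᵥ (Matrix.diagonal (fun k => f k ω) *ᵥ wo)) ^ 2 ∂μ)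
        = p * (wo ⬝ᵥ (Ru *ᵥ wo)) + p * σξ ^ 2 * (∑ j, wo j ^ 2)
    ∧ σv ^ 2 = (∫ ω, (d ω - censReg M f u ξ ω ⬝ᵥ wo) ^ 2 ∂μ)
        - p * (wo ⬝ᵥ (Ru *ᵥ wo)) - p * σξ ^ 2 * (∑ j, wo j ^ 2) := by
  have hXL2 := memLp_maskedDiff (μ := μ) (u := u) (ξ := ξ) hfmeas hf01 huL2 hξL2
  have hfmean : ∀ j, ∫ ω, f j ω ∂μ = p := fun j => by
    rw [integral_eq_measureReal_of_zero_or_one (hfmeas j) (hf01 j), measureReal_def, hfp j,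
      ENNReal.toReal_ofReal hp0]
  have hsecond : ∫ ω, (maskedDiff M f u ξ ω ⬝ᵥ wo) ^ 2 ∂μ
      = p * (wo ⬝ᵥ (Ru *ᵥ wo)) + p * σξ ^ 2 * (∑ j, wo j ^ 2) := by
    rw [integral_sq_dotProduct hXL2, secondMoment_maskedDiff_of_isDiag hindep hfmeas humeas hξmeas
      huL2 hξL2 hξmean hRu hRudiag hξcov hf01 hfmean, show ∑ j, wo j ^ 2 = wo ⬝ᵥ wo by
        simp [dotProduct, sq]]
    simp only [smul_mulVec, add_mulVec, one_mulVec, dotProduct_smul, dotProduct_add, smul_eq_mul]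
    ring
  have hresidual : ∀ ω, d ω - censReg M f u ξ ω ⬝ᵥ wo = v ω + maskedDiff M f u ξ ω ⬝ᵥ wo :=
    fun ω => by rw [hd, add_sub_right_comm, dotProduct_sub_censReg_dotProduct, add_comm]
  have hXwL2 : MemLp (fun ω => maskedDiff M f u ξ ω ⬝ᵥ wo) 2 μ :=
    memLp_finsetSum _ fun j _ => (hXL2 j).mul_const (wo j)
  refine ⟨by simpa only [dotProduct_diagonal_mulVec_eq_maskedDiff] using hsecond, ?_⟩
  simp_rw [hresidual]
  rw [integral_add_sq_of_indepFun hvL2 hXwL2 (indepFun_maskedDiff_dotProduct hvindep wo) hvmean,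
    hvvar, hsecond]
  ring

/-- if `R_u` is diagonal then `E[((u − ξ)ᵀ F wᵒ)²] = p (wᵒ)ᵀ R_u wᵒ +
p σ_ξ² ‖wᵒ‖²`, and consequently
`σ_v² = E[(d − ūᵀ wᵒ)²] − p (wᵒ)ᵀ R_u wᵒ − p σ_ξ² ‖wᵒ‖²`. -/
theorem noise_variance_expression_diagonal
    {Ω : Type*} [MeasurableSpace Ω] (μ : Measure Ω) [IsProbabilityMeasure μ]
    (M : ℕ) (p : ℝ) (hp0 : 0 ≤ p) (hp1 : p < 1) (σξ : ℝ) (hσξ : 0 ≤ σξ)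
    (u ξ : Ω → Fin M → ℝ) (f : Fin M → Ω → ℝ)
    (humeas : Measurable u) (hξmeas : Measurable ξ) (hfmeas : ∀ j, Measurable (f j))
    (huL2 : ∀ i, MemLp (fun ω => u ω i) 2 μ) (hξL2 : ∀ i, MemLp (fun ω => ξ ω i) 2 μ)
    (humean : ∀ i, ∫ ω, u ω i ∂μ = 0) (hξmean : ∀ i, ∫ ω, ξ ω i ∂μ = 0)
    (Ru : Matrix (Fin M) (Fin M) ℝ)
    (hRu : ∀ i j, Ru i j = ∫ ω, u ω i * u ω j ∂μ)
    (hRudiag : Ru.IsDiag)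
    (hξcov : ∀ i j, ∫ ω, ξ ω i * ξ ω j ∂μ = if i = j then σξ ^ 2 else 0)
    (hf01 : ∀ j ω, f j ω = 0 ∨ f j ω = 1)
    (hfp : ∀ j, μ {ω | f j ω = 1} = ENNReal.ofReal p)
    (hindep : iIndepFun (missFun M f u ξ) μ)
    (wo : Fin M → ℝ) (v : Ω → ℝ) (σv : ℝ)
    (hvmeas : Measurable v) (hvL2 : MemLp v 2 μ)
    (hvmean : ∫ ω, v ω ∂μ = 0) (hvvar : ∫ ω, (v ω) ^ 2 ∂μ = σv ^ 2)
    (hvindep : IndepFun (fun ω => (u ω, (fun j => f j ω), ξ ω)) v μ)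
    (d : Ω → ℝ) (hd : ∀ ω, d ω = u ω ⬝ᵥ wo + v ω) :
    (∫ ω, ((u ω - ξ ω) ⬝ᵥ (Matrix.diagonal (fun k => f k ω) *ᵥ wo)) ^ 2 ∂μ)
        = p * (wo ⬝ᵥ (Ru *ᵥ wo)) + p * σξ ^ 2 * (∑ j, wo j ^ 2)
    ∧ σv ^ 2 = (∫ ω, (d ω - censReg M f u ξ ω ⬝ᵥ wo) ^ 2 ∂μ)
        - p * (wo ⬝ᵥ (Ru *ᵥ wo)) - p * σξ ^ 2 * (∑ j, wo j ^ 2) :=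
  noise_variance_expression_diagonal_general μ M p hp0 σξ u ξ f humeas hξmeas hfmeas huL2 hξL2
    hξmean Ru hRu hRudiag hξcov hf01 hfp hindep wo v σv hvL2 hvmean hvvar hvindep d hd
end

section
/- If the covariance matrix R_u is diagonal, then E[ū (u − ξ)ᵀ F] = −p σ_ξ² I_M. -/
open MeasureTheory ProbabilityTheory Matrix
open scoped Matrix

/-! Entrywise, `ū_i f_j (u_j - ξ_j) = (1 - f_i) f_j · u_i (u_j - ξ_j) + f_i f_j · ξ_i (u_j - ξ_j)`.
The masks `(f_i, f_j)` are independent of `(u, ξ)`, so each term factors into a moment of the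
masks times a second moment of `(u, ξ)`. Off the diagonal these second moments vanish, because
`R_u` is diagonal, `ξ` is white and `ξ` is centred and independent of `u`. On the diagonal
`(1 - f_i) f_i = 0` and `f_i² = f_i` has mean `p`, which leaves `p E[ξ_i (u_i - ξ_i)] = -p σ_ξ²`. -/

section

variable {Ω : Type*} [MeasurableSpace Ω] {μ : Measure Ω}

lemma integral_eq_measureReal_of_eq_zero_or_one {g : Ω → ℝ} (hg : Measurable g)
    (h01 : ∀ ω, g ω = 0 ∨ g ω = 1) : ∫ ω, g ω ∂μ = μ.real {ω | g ω = 1} := by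
  calc ∫ ω, g ω ∂μ = ∫ ω, (g ⁻¹' {1}).indicator 1 ω ∂μ := by
        congr 1 with ω
        rcases h01 ω with h | h <;> simp [h]
    _ = μ.real {ω | g ω = 1} := integral_indicator_one (hg (measurableSet_singleton 1))

lemma integrable_fun_mul_of_memLp_two {X Y : Ω → ℝ} (hX : MemLp X 2 μ) (hY : MemLp Y 2 μ) :
    Integrable (fun ω => X ω * Y ω) μ :=
  hX.integrable_mul hY

lemma integral_mul_sub_of_memLp_two {X Y Z : Ω → ℝ} (hX : MemLp X 2 μ) (hY : MemLp Y 2 μ)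
    (hZ : MemLp Z 2 μ) :
    ∫ ω, X ω * (Y ω - Z ω) ∂μ = ∫ ω, X ω * Y ω ∂μ - ∫ ω, X ω * Z ω ∂μ := by
  simp_rw [mul_sub]
  exact integral_sub (integrable_fun_mul_of_memLp_two hX hY) (integrable_fun_mul_of_memLp_two hX hZ)

lemma integral_mul_eq_zero_of_indepFun {X Y : Ω → ℝ} (hXY : IndepFun X Y μ)
    (hX : AEStronglyMeasurable X μ) (hY : AEStronglyMeasurable Y μ) (hY0 : ∫ ω, Y ω ∂μ = 0) :
    ∫ ω, X ω * Y ω ∂μ = 0 := by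
  rw [hXY.integral_fun_mul_eq_mul_integral hX hY, hY0, mul_zero]

end

lemma censReg_mul_vecMul_diagonal {Ω : Type*} (M : ℕ) (f : Fin M → Ω → ℝ) (u ξ : Ω → Fin M → ℝ)
    (ω : Ω) (i j : Fin M) :
    censReg M f u ξ ω i * ((u ω - ξ ω) ᵥ* diagonal fun k => f k ω) j
      = (1 - f i ω) * f j ω * (u ω i * (u ω j - ξ ω j))
        + f i ω * f j ω * (ξ ω i * (u ω j - ξ ω j)) := by
  simp only [censReg, sub_mulVec, one_mulVec, mulVec_diagonal, vecMul_diagonal, Pi.add_apply,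
    Pi.sub_apply]
  ring

lemma integral_censReg_mul_vecMul_diagonal {Ω : Type*} [MeasurableSpace Ω] {μ : Measure Ω}
    {M : ℕ} {f : Fin M → Ω → ℝ} {u ξ : Ω → Fin M → ℝ} (hfmeas : ∀ k, Measurable (f k))
    (hf01 : ∀ k ω, f k ω = 0 ∨ f k ω = 1)
    (huL2 : ∀ k, MemLp (fun ω => u ω k) 2 μ) (hξL2 : ∀ k, MemLp (fun ω => ξ ω k) 2 μ)
    {i j : Fin M} (hind : IndepFun (fun ω => (f i ω, f j ω)) (fun ω => (u ω, ξ ω)) μ) :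
    ∫ ω, censReg M f u ξ ω i * ((u ω - ξ ω) ᵥ* diagonal fun k => f k ω) j ∂μ
      = (∫ ω, (1 - f i ω) * f j ω ∂μ) * ∫ ω, u ω i * (u ω j - ξ ω j) ∂μ
        + (∫ ω, f i ω * f j ω ∂μ) * ∫ ω, ξ ω i * (u ω j - ξ ω j) ∂μ := by
  have hdiff : MemLp (fun ω => u ω j - ξ ω j) 2 μ := (huL2 j).sub (hξL2 j)
  have hu : Integrable (fun ω => u ω i * (u ω j - ξ ω j)) μ :=
    integrable_fun_mul_of_memLp_two (huL2 i) hdiff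
  have hξ : Integrable (fun ω => ξ ω i * (u ω j - ξ ω j)) μ :=
    integrable_fun_mul_of_memLp_two (hξL2 i) hdiff
  have hnorm : ∀ ω, ‖(1 - f i ω) * f j ω‖ ≤ 1 ∧ ‖f i ω * f j ω‖ ≤ 1 := fun ω => by
    rcases hf01 i ω with h | h <;> rcases hf01 j ω with h' | h' <;> simp [h, h']
  have hmeas1 : Measurable fun ω => (1 - f i ω) * f j ω := by fun_prop
  have hmeas2 : Measurable fun ω => f i ω * f j ω := by fun_prop
  have hind1 : IndepFun (fun ω => (1 - f i ω) * f j ω) (fun ω => u ω i * (u ω j - ξ ω j)) μ :=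
    hind.comp (φ := fun q : ℝ × ℝ => (1 - q.1) * q.2)
      (ψ := fun q : (Fin M → ℝ) × (Fin M → ℝ) => q.1 i * (q.1 j - q.2 j)) (by fun_prop)
      (by fun_prop)
  have hind2 : IndepFun (fun ω => f i ω * f j ω) (fun ω => ξ ω i * (u ω j - ξ ω j)) μ :=
    hind.comp (φ := fun q : ℝ × ℝ => q.1 * q.2)
      (ψ := fun q : (Fin M → ℝ) × (Fin M → ℝ) => q.2 i * (q.1 j - q.2 j)) (by fun_prop)
      (by fun_prop)
  simp_rw [censReg_mul_vecMul_diagonal]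
  rw [integral_add
      (hu.bdd_mul hmeas1.aestronglyMeasurable (.of_forall fun ω => (hnorm ω).1))
      (hξ.bdd_mul hmeas2.aestronglyMeasurable (.of_forall fun ω => (hnorm ω).2)),
    hind1.integral_fun_mul_eq_mul_integral hmeas1.aestronglyMeasurable hu.aestronglyMeasurable,
    hind2.integral_fun_mul_eq_mul_integral hmeas2.aestronglyMeasurable hξ.aestronglyMeasurable]

theorem cross_term_expectation_diagonal_general
    {Ω : Type*} [MeasurableSpace Ω] (μ : Measure Ω)
    (M : ℕ) (p : ℝ) (hp0 : 0 ≤ p) (σξ : ℝ)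
    (u ξ : Ω → Fin M → ℝ) (f : Fin M → Ω → ℝ)
    (hfmeas : ∀ j, Measurable (f j))
    (huL2 : ∀ i, MemLp (fun ω => u ω i) 2 μ) (hξL2 : ∀ i, MemLp (fun ω => ξ ω i) 2 μ)
    (hξmean : ∀ i, ∫ ω, ξ ω i ∂μ = 0)
    (Ru : Matrix (Fin M) (Fin M) ℝ)
    (hRu : ∀ i j, Ru i j = ∫ ω, u ω i * u ω j ∂μ)
    (hRudiag : Ru.IsDiag)
    (hξcov : ∀ i j, ∫ ω, ξ ω i * ξ ω j ∂μ = if i = j then σξ ^ 2 else 0)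
    (hf01 : ∀ j ω, f j ω = 0 ∨ f j ω = 1)
    (hfp : ∀ j, μ {ω | f j ω = 1} = ENNReal.ofReal p)
    (hindep : iIndepFun (missFun M f u ξ) μ) :
    (Matrix.of fun i j =>
        ∫ ω, censReg M f u ξ ω i *
          ((u ω - ξ ω) ᵥ* Matrix.diagonal (fun k => f k ω)) j ∂μ)
      = (-(p * σξ ^ 2)) • (1 : Matrix (Fin M) (Fin M) ℝ) := by
  have hu : AEMeasurable u μ := aemeasurable_pi_lambda u fun i => (huL2 i).aemeasurable
  have hξ : AEMeasurable ξ μ := aemeasurable_pi_lambda ξ fun i => (hξL2 i).aemeasurable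
  have hmeas : ∀ k, AEMeasurable (missFun M f u ξ k) μ
    | .F j => (hfmeas j).aemeasurable
    | .U => hu
    | .Xi => hξ
  have huξ : IndepFun u ξ μ := hindep.indepFun (i := .U) (j := .Xi) nofun
  have hmask : ∀ i j, IndepFun (fun ω => (f i ω, f j ω)) (fun ω => (u ω, ξ ω)) μ := fun i j =>
    hindep.indepFun_prodMk_prodMk₀ hmeas (.F i) (.F j) .U .Xi nofun nofun nofun nofun
  have huξ_uncorr : ∀ i j, ∫ ω, u ω i * ξ ω j ∂μ = 0 := fun i j =>
    integral_mul_eq_zero_of_indepFun (huξ.comp (measurable_pi_apply i) (measurable_pi_apply j))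
      (huL2 i).1 (hξL2 j).1 (hξmean j)
  have hξu_uncorr : ∀ i j, ∫ ω, ξ ω i * u ω j ∂μ = 0 := fun i j => by
    simpa only [mul_comm] using huξ_uncorr j i
  ext i j
  rw [of_apply, integral_censReg_mul_vecMul_diagonal hfmeas hf01 huL2 hξL2 (hmask i j),
    integral_mul_sub_of_memLp_two (huL2 i) (huL2 j) (hξL2 j),
    integral_mul_sub_of_memLp_two (hξL2 i) (huL2 j) (hξL2 j), ← hRu, huξ_uncorr, hξu_uncorr, hξcov]
  rcases eq_or_ne i j with rfl | hij
  · have hidem : ∀ ω, f i ω * f i ω = f i ω := fun ω => by rcases hf01 i ω with h | h <;> simp [h]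
    have hmean : ∫ ω, f i ω ∂μ = p := by
      rw [integral_eq_measureReal_of_eq_zero_or_one (hfmeas i) (hf01 i), measureReal_def, hfp,
        ENNReal.toReal_ofReal hp0]
    simp [sub_mul, hidem, hmean]
  · simp [hRudiag hij, hij]

/-- if `R_u` is diagonal then `E[ū (u − ξ)ᵀ F] = −p σ_ξ² I_M`
(expectation taken entrywise). -/
theorem cross_term_expectation_diagonal
    {Ω : Type*} [MeasurableSpace Ω] (μ : Measure Ω) [IsProbabilityMeasure μ]
    (M : ℕ) (p : ℝ) (hp0 : 0 ≤ p) (hp1 : p < 1) (σξ : ℝ) (hσξ : 0 ≤ σξ)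
    (u ξ : Ω → Fin M → ℝ) (f : Fin M → Ω → ℝ)
    (humeas : Measurable u) (hξmeas : Measurable ξ) (hfmeas : ∀ j, Measurable (f j))
    (huL2 : ∀ i, MemLp (fun ω => u ω i) 2 μ) (hξL2 : ∀ i, MemLp (fun ω => ξ ω i) 2 μ)
    (humean : ∀ i, ∫ ω, u ω i ∂μ = 0) (hξmean : ∀ i, ∫ ω, ξ ω i ∂μ = 0)
    (Ru : Matrix (Fin M) (Fin M) ℝ)
    (hRu : ∀ i j, Ru i j = ∫ ω, u ω i * u ω j ∂μ)
    (hRudiag : Ru.IsDiag)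
    (hξcov : ∀ i j, ∫ ω, ξ ω i * ξ ω j ∂μ = if i = j then σξ ^ 2 else 0)
    (hf01 : ∀ j ω, f j ω = 0 ∨ f j ω = 1)
    (hfp : ∀ j, μ {ω | f j ω = 1} = ENNReal.ofReal p)
    (hindep : iIndepFun (missFun M f u ξ) μ) :
    (Matrix.of fun i j =>
        ∫ ω, censReg M f u ξ ω i *
          ((u ω - ξ ω) ᵥ* Matrix.diagonal (fun k => f k ω)) j ∂μ)
      = (-(p * σξ ^ 2)) • (1 : Matrix (Fin M) (Fin M) ℝ) :=
  cross_term_expectation_diagonal_general μ M p hp0 σξ u ξ f hfmeas huL2 hξL2 hξmean Ru hRu hRudiag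
    hξcov hf01 hfp hindep
end

section
/- Let A ∈ ℝ^{N×N} be a left-stochastic matrix (all entries nonnegative and each column summing to one), let p ∈ [0,1), and for k = 1,…,N let R_k ∈ ℝ^{M×M} be symmetric positive definite and μ_k real with 0 < μ_k < 2/((1−p) λ_max(R_k)), where λ_max denotes the largest eigenvalue. Define the block-diagonal matrices ℳ = diag(μ₁ I_M, …, μ_N I_M) and ℛ = diag(R₁, …, R_N), and set B := (Aᵀ ⊗ I_M)(I_{NM} − (1−p) ℳ ℛ). Then every complex eigenvalue of B has modulus strictly less than 1; consequently, for any initial vector x₀ ∈ ℝ^{NM}, the recursion x_i = B x_{i−1} satisfies x_i → 0 as i → ∞. In particular, the mean error recursion of the modified diffusion algorithm is mean-stable and asymptotically unbiased under this step-size condition. -/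
/-!
Measure vectors of `ℝ^{NM}` blockwise, `‖x‖ = max_k ‖x_k‖₂`. The factor `I − (1−p)ℳℛ` is
block diagonal with symmetric blocks `I − (1−p)μ_k R_k`, whose eigenvalues `1 − (1−p)μ_k λ`
lie in `(−1, 1)` by the step-size condition; so it contracts by `c = max_k ‖I − (1−p)μ_k R_k‖₂ < 1`.
The factor `Aᵀ ⊗ I_M` replaces each block by a convex combination of blocks (weights from a column
of `A`), so it does not expand. Hence `Bⁱ → 0`, and an eigenvector `v` for `z` gives
`zⁱ v = Bⁱ v → 0`, so `|z| < 1`.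
-/

open Matrix Filter Topology
open scoped Kronecker

namespace Matrix

variable {𝕜 n : Type*} [Fintype n] [DecidableEq n]

theorem tendsto_pow_nhds_zero_of_tendsto_pow_mulVec [Semiring 𝕜] [TopologicalSpace 𝕜]
    {B : Matrix n n 𝕜}
    (h : ∀ x, Tendsto (fun i => B ^ i *ᵥ x) atTop (𝓝 0)) :
    Tendsto (fun i => B ^ i) atTop (𝓝 0) := by
  refine tendsto_pi_nhds.2 fun a => tendsto_pi_nhds.2 fun b => ?_
  simpa [mulVec_single_one] using tendsto_pi_nhds.1 (h (Pi.single b 1)) a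

theorem norm_lt_one_of_mem_spectrum_of_tendsto_pow [NormedField 𝕜] {C : Matrix n n 𝕜}
    (h : Tendsto (fun i => C ^ i) atTop (𝓝 0)) {z : 𝕜} (hz : z ∈ spectrum 𝕜 C) : ‖z‖ < 1 := by
  rw [← AlgEquiv.spectrum_eq toLinAlgEquiv', ← Module.End.hasEigenvalue_iff_mem_spectrum] at hz
  obtain ⟨v, hv⟩ := hz.exists_hasEigenvector
  obtain ⟨a, ha⟩ : ∃ a, v a ≠ 0 := Function.ne_iff.mp hv.2
  have hpow : ∀ i, (C ^ i *ᵥ v) a = z ^ i * v a := fun i => by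
    simpa [← map_pow] using congrFun (hv.pow_apply i) a
  have hlim : Tendsto (fun i => (C ^ i *ᵥ v) a) atTop (𝓝 0) := by
    have hcont : Continuous fun D : Matrix n n 𝕜 => (D *ᵥ v) a :=
      (continuous_apply a).comp (continuous_id.matrix_mulVec continuous_const)
    simpa only [zero_mulVec, Pi.zero_apply, Function.comp_def] using (hcont.tendsto 0).comp h
  rw [← tendsto_pow_atTop_nhds_zero_iff_norm_lt_one]
  simpa [hpow, ha] using hlim.mul_const (v a)⁻¹

theorem norm_lt_one_of_mem_spectrum_map_ofReal {B : Matrix n n ℝ}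
    (h : Tendsto (fun i => B ^ i) atTop (𝓝 0)) {z : ℂ}
    (hz : z ∈ spectrum ℂ (B.map Complex.ofReal)) : ‖z‖ < 1 := by
  refine norm_lt_one_of_mem_spectrum_of_tendsto_pow ?_ hz
  have hmap : ∀ i, (B.map Complex.ofReal) ^ i = (B ^ i).map Complex.ofReal := fun i =>
    (map_pow Complex.ofRealHom.mapMatrix B i).symm
  simpa [hmap, Function.comp_def] using
    ((continuous_id.matrix_map Complex.continuous_ofReal).tendsto 0).comp h

open scoped Matrix.Norms.L2Operator in
theorem PosDef.norm_toEuclideanCLM_one_sub_smul_lt_one [Nonempty n] {R : Matrix n n ℝ}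
    (hR : R.PosDef) {a : ℝ} (ha : 0 < a)
    (h : a * Finset.univ.sup' Finset.univ_nonempty hR.1.eigenvalues < 2) :
    ‖toEuclideanCLM (𝕜 := ℝ) (n := n) (1 - a • R)‖ < 1 := by
  have hR_sa : IsSelfAdjoint R := hR.1
  have hcfc : 1 - a • R = cfc (fun x : ℝ => 1 - a * x) R := by
    rw [cfc_sub _ _ R, cfc_const_one ℝ R, cfc_const_mul a _ R, cfc_id' ℝ R]
  rw [l2_opNorm_toEuclideanCLM, hcfc]
  refine norm_cfc_lt one_pos fun x hx => ?_
  obtain ⟨j, rfl⟩ := hR.1.spectrum_real_eq_range_eigenvalues ▸ hx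
  have hpos := hR.eigenvalues_pos j
  have hle :
      a * hR.1.eigenvalues j ≤ a * Finset.univ.sup' Finset.univ_nonempty hR.1.eigenvalues :=
    mul_le_mul_of_nonneg_left (Finset.le_sup' _ (Finset.mem_univ j)) ha.le
  rw [Real.norm_eq_abs, abs_lt]
  constructor <;> nlinarith

end Matrix

variable {ι κ : Type*} [Fintype ι] [Fintype κ]

/-- `Matrix.blockDiagonal` with the block index first, matching the indexing of `ℛ`. -/
def blockDiagonalFst {R : Type*} [Zero R] [DecidableEq ι] (S : ι → Matrix κ κ R) :
    Matrix (ι × κ) (ι × κ) R :=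
  of fun x y => if x.1 = y.1 then S x.1 x.2 y.2 else 0

def blockVector (x : ι × κ → ℝ) : ι → EuclideanSpace ℝ κ :=
  fun k => WithLp.toLp 2 fun m => x (k, m)

theorem norm_le_norm_blockVector (x : ι × κ → ℝ) : ‖x‖ ≤ ‖blockVector x‖ := by
  refine pi_norm_le_iff_of_nonneg (norm_nonneg _) |>.2 fun km => ?_
  calc ‖x km‖ ≤ ‖blockVector x km.1‖ := PiLp.norm_apply_le (blockVector x km.1) km.2
    _ ≤ ‖blockVector x‖ := norm_le_pi_norm _ _

theorem blockVector_blockDiagonalFst_mulVec [DecidableEq ι] [DecidableEq κ]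
    (S : ι → Matrix κ κ ℝ) (x : ι × κ → ℝ) (k : ι) :
    blockVector (blockDiagonalFst S *ᵥ x) k = toEuclideanCLM (𝕜 := ℝ) (S k) (blockVector x k) := by
  ext m
  simp [blockVector, blockDiagonalFst, mulVec, dotProduct, Fintype.sum_prod_type, ite_mul]

theorem blockVector_kronecker_one_mulVec [DecidableEq κ] (A : Matrix ι ι ℝ) (y : ι × κ → ℝ)
    (k : ι) :
    blockVector ((Aᵀ ⊗ₖ (1 : Matrix κ κ ℝ)) *ᵥ y) k = ∑ l, A l k • blockVector y l := by
  ext m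
  simp [blockVector, mulVec, dotProduct, Fintype.sum_prod_type, one_apply, ite_mul]

theorem norm_blockVector_kronecker_one_mulVec_le [DecidableEq κ] (A : Matrix ι ι ℝ)
    (hA0 : ∀ l k, 0 ≤ A l k) (hA1 : ∀ k, ∑ l, A l k ≤ 1) (y : ι × κ → ℝ) :
    ‖blockVector ((Aᵀ ⊗ₖ (1 : Matrix κ κ ℝ)) *ᵥ y)‖ ≤ ‖blockVector y‖ := by
  refine pi_norm_le_iff_of_nonneg (norm_nonneg _) |>.2 fun k => ?_
  rw [blockVector_kronecker_one_mulVec]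
  calc ‖∑ l, A l k • blockVector y l‖ ≤ ∑ l, A l k * ‖blockVector y‖ := by
        refine (norm_sum_le _ _).trans (Finset.sum_le_sum fun l _ => ?_)
        rw [norm_smul, Real.norm_of_nonneg (hA0 l k)]
        exact mul_le_mul_of_nonneg_left (norm_le_pi_norm _ l) (hA0 l k)
    _ ≤ ‖blockVector y‖ := by
        rw [← Finset.sum_mul]
        exact mul_le_of_le_one_left (norm_nonneg _) (hA1 k)

theorem norm_blockVector_blockDiagonalFst_mulVec_le [DecidableEq ι] [DecidableEq κ]
    (S : ι → Matrix κ κ ℝ) {c : ℝ} (hc : 0 ≤ c) (hS : ∀ l, ‖toEuclideanCLM (𝕜 := ℝ) (S l)‖ ≤ c)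
    (x : ι × κ → ℝ) :
    ‖blockVector (blockDiagonalFst S *ᵥ x)‖ ≤ c * ‖blockVector x‖ := by
  refine pi_norm_le_iff_of_nonneg (by positivity) |>.2 fun k => ?_
  rw [blockVector_blockDiagonalFst_mulVec]
  calc ‖toEuclideanCLM (𝕜 := ℝ) (S k) (blockVector x k)‖
      ≤ ‖toEuclideanCLM (𝕜 := ℝ) (S k)‖ * ‖blockVector x k‖ :=
        (toEuclideanCLM (𝕜 := ℝ) (S k)).le_opNorm _
    _ ≤ c * ‖blockVector x‖ := mul_le_mul (hS k) (norm_le_pi_norm _ k) (norm_nonneg _) hc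

theorem norm_blockVector_kronecker_one_mul_blockDiagonalFst_mulVec_le [DecidableEq ι]
    [DecidableEq κ] (A : Matrix ι ι ℝ) (hA0 : ∀ l k, 0 ≤ A l k) (hA1 : ∀ k, ∑ l, A l k ≤ 1)
    (S : ι → Matrix κ κ ℝ) {c : ℝ} (hc : 0 ≤ c) (hS : ∀ l, ‖toEuclideanCLM (𝕜 := ℝ) (S l)‖ ≤ c)
    (x : ι × κ → ℝ) :
    ‖blockVector (((Aᵀ ⊗ₖ (1 : Matrix κ κ ℝ)) * blockDiagonalFst S) *ᵥ x)‖
      ≤ c * ‖blockVector x‖ := by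
  rw [← mulVec_mulVec]
  exact (norm_blockVector_kronecker_one_mulVec_le A hA0 hA1 _).trans
    (norm_blockVector_blockDiagonalFst_mulVec_le S hc hS x)

theorem tendsto_pow_mulVec_of_norm_blockVector_mulVec_le [DecidableEq ι] [DecidableEq κ]
    {B : Matrix (ι × κ) (ι × κ) ℝ} {c : ℝ} (hc0 : 0 ≤ c) (hc1 : c < 1)
    (hB : ∀ x, ‖blockVector (B *ᵥ x)‖ ≤ c * ‖blockVector x‖) (x : ι × κ → ℝ) :
    Tendsto (fun i => B ^ i *ᵥ x) atTop (𝓝 0) := by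
  have hpow : ∀ i, ‖blockVector (B ^ i *ᵥ x)‖ ≤ c ^ i * ‖blockVector x‖ := by
    intro i
    induction i with
    | zero => simp
    | succ i ih =>
      calc ‖blockVector (B ^ (i + 1) *ᵥ x)‖ = ‖blockVector (B *ᵥ (B ^ i *ᵥ x))‖ := by
            rw [pow_succ', mulVec_mulVec]
        _ ≤ c * (c ^ i * ‖blockVector x‖) := (hB _).trans (mul_le_mul_of_nonneg_left ih hc0)
        _ = c ^ (i + 1) * ‖blockVector x‖ := by ring
  refine squeeze_zero_norm (fun i => (norm_le_norm_blockVector _).trans (hpow i)) ?_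
  simpa using (tendsto_pow_atTop_nhds_zero_of_lt_one hc0 hc1).mul_const ‖blockVector x‖

theorem one_sub_smul_diagonal_mul_blockDiagonalFst {R : Type*} [CommRing R] [DecidableEq ι]
    [DecidableEq κ] (t : R) (μ : ι → R) (S : ι → Matrix κ κ R) :
    1 - t • (diagonal (fun x : ι × κ => μ x.1) * blockDiagonalFst S)
      = blockDiagonalFst fun l => 1 - (t * μ l) • S l := by
  ext ⟨k, m⟩ ⟨l, m'⟩
  by_cases hkl : k = l
  · subst hkl
    simp [blockDiagonalFst, one_apply, mul_assoc]
  · simp [blockDiagonalFst, one_apply, hkl]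

theorem diffusion_mean_stability_general
    (N M : ℕ) (p : ℝ) (hp1 : p < 1)
    (A : Matrix (Fin (N + 1)) (Fin (N + 1)) ℝ)
    (hAnonneg : ∀ l k, 0 ≤ A l k)
    (hAcol : ∀ k, ∑ l, A l k = 1)
    (R : Fin (N + 1) → Matrix (Fin (M + 1)) (Fin (M + 1)) ℝ)
    (hRpd : ∀ k, (R k).PosDef)
    (μ : Fin (N + 1) → ℝ)
    (hμ : ∀ k, 0 < μ k ∧
        μ k < 2 / ((1 - p) *
          (Finset.univ.sup' Finset.univ_nonempty ((hRpd k).1.eigenvalues))))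
    (MM RR B : Matrix (Fin (N + 1) × Fin (M + 1)) (Fin (N + 1) × Fin (M + 1)) ℝ)
    (hMM : MM = Matrix.diagonal (fun x => μ x.1))
    (hRR : RR = Matrix.of fun x y => if x.1 = y.1 then R x.1 x.2 y.2 else 0)
    (hB : B = (Aᵀ ⊗ₖ (1 : Matrix (Fin (M + 1)) (Fin (M + 1)) ℝ)) *
        ((1 : Matrix (Fin (N + 1) × Fin (M + 1)) (Fin (N + 1) × Fin (M + 1)) ℝ)
          - (1 - p) • (MM * RR))) :
    (∀ z ∈ spectrum ℂ (B.map Complex.ofReal), ‖z‖ < 1)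
    ∧ (∀ x : ℕ → (Fin (N + 1) × Fin (M + 1)) → ℝ,
        (∀ i : ℕ, x (i + 1) = B *ᵥ x i) → Tendsto x atTop (nhds 0)) := by
  set S := fun l => 1 - ((1 - p) * μ l) • R l
  have hS : ∀ l, ‖toEuclideanCLM (𝕜 := ℝ) (S l)‖ < 1 := fun l => by
    have hsup_pos : 0 < Finset.univ.sup' Finset.univ_nonempty (hRpd l).1.eigenvalues :=
      ((hRpd l).eigenvalues_pos 0).trans_le (Finset.le_sup' _ (Finset.mem_univ 0))
    have hstep := (lt_div_iff₀ (by nlinarith)).1 (hμ l).2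
    exact (hRpd l).norm_toEuclideanCLM_one_sub_smul_lt_one
      (mul_pos (by linarith) (hμ l).1) (by linarith)
  set c := Finset.univ.sup' Finset.univ_nonempty fun l => ‖toEuclideanCLM (𝕜 := ℝ) (S l)‖
  have hSc : ∀ l, ‖toEuclideanCLM (𝕜 := ℝ) (S l)‖ ≤ c := fun l =>
    Finset.le_sup' (fun l => ‖toEuclideanCLM (𝕜 := ℝ) (S l)‖) (Finset.mem_univ l)
  have hc0 : 0 ≤ c := (norm_nonneg _).trans (hSc 0)
  have hc1 : c < 1 := (Finset.sup'_lt_iff _).2 fun l _ => hS l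
  have hBS : B = (Aᵀ ⊗ₖ (1 : Matrix (Fin (M + 1)) (Fin (M + 1)) ℝ)) * blockDiagonalFst S := by
    rw [hB, hMM, hRR, ← one_sub_smul_diagonal_mul_blockDiagonalFst]
    rfl
  have hdecay := tendsto_pow_mulVec_of_norm_blockVector_mulVec_le hc0 hc1 fun x => hBS ▸
    norm_blockVector_kronecker_one_mul_blockDiagonalFst_mulVec_le A hAnonneg (fun k => (hAcol k).le)
      S hc0 hSc x
  refine ⟨fun z hz => norm_lt_one_of_mem_spectrum_map_ofReal
    (tendsto_pow_nhds_zero_of_tendsto_pow_mulVec hdecay) hz, fun x hx => ?_⟩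
  have hx_pow : x = fun i => B ^ i *ᵥ x 0 := funext fun i => by
    induction i with
    | zero => simp
    | succ i ih => rw [hx, ih, pow_succ', mulVec_mulVec]
  exact hx_pow ▸ hdecay (x 0)

/-- mean stability of the modified diffusion recursion. If `A` is
left-stochastic, each `R_k` is symmetric positive definite, and
`0 < μ_k < 2/((1−p) λ_max(R_k))`, then every eigenvalue of
`B = (Aᵀ ⊗ I_M)(I − (1−p) ℳ ℛ)` has modulus strictly less than one, and the recursion
`x_i = B x_{i−1}` converges to zero from any initial condition. -/
theorem diffusion_mean_stability
    (N M : ℕ) (p : ℝ) (hp0 : 0 ≤ p) (hp1 : p < 1)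
    (A : Matrix (Fin (N + 1)) (Fin (N + 1)) ℝ)
    (hAnonneg : ∀ l k, 0 ≤ A l k)
    (hAcol : ∀ k, ∑ l, A l k = 1)
    (R : Fin (N + 1) → Matrix (Fin (M + 1)) (Fin (M + 1)) ℝ)
    (hRpd : ∀ k, (R k).PosDef)
    (μ : Fin (N + 1) → ℝ)
    (hμ : ∀ k, 0 < μ k ∧
        μ k < 2 / ((1 - p) *
          (Finset.univ.sup' Finset.univ_nonempty ((hRpd k).1.eigenvalues))))
    (MM RR B : Matrix (Fin (N + 1) × Fin (M + 1)) (Fin (N + 1) × Fin (M + 1)) ℝ)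
    (hMM : MM = Matrix.diagonal (fun x => μ x.1))
    (hRR : RR = Matrix.of fun x y => if x.1 = y.1 then R x.1 x.2 y.2 else 0)
    (hB : B = (Aᵀ ⊗ₖ (1 : Matrix (Fin (M + 1)) (Fin (M + 1)) ℝ)) *
        ((1 : Matrix (Fin (N + 1) × Fin (M + 1)) (Fin (N + 1) × Fin (M + 1)) ℝ)
          - (1 - p) • (MM * RR))) :
    (∀ z ∈ spectrum ℂ (B.map Complex.ofReal), ‖z‖ < 1)
    ∧ (∀ x : ℕ → (Fin (N + 1) × Fin (M + 1)) → ℝ,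
        (∀ i : ℕ, x (i + 1) = B *ᵥ x i) → Tendsto x atTop (nhds 0)) :=
  diffusion_mean_stability_general N M p hp1 A hAnonneg hAcol R hRpd μ hμ MM RR B hMM hRR hB
end
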